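/- For any closed EPCF computation ⊢ C : T and any closed λY-term ⊢ c : T* → o, the Böhm tree of C* c equals the effect tree of C in which every leaf return(V) is replaced by the Böhm tree of c V*. -/

import Mathlib

/-! The λY-calculus: simply-typed λ-calculus with a fixpoint combinator Y and
first-order constants drawn from a signature `F` with arity `ar : F → ℕ`. -/

namespace LamY

/-- Simple types: `o` and arrow types. -/
inductive Ty : Type
  | o : Ty
  | arr : Ty → Ty → Ty
  deriving DecidableEq

/-- Terms (de Bruijn representation) over a set `F` of first-order constants. -/
inductive Tm (F : Type) : Type
  | var : ℕ → Tm F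
  | lam : Tm F → Tm F
  | app : Tm F → Tm F → Tm F
  | fixY : Tm F → Tm F
  | const : F → Tm F

namespace Tm

variable {F : Type}

/-- Lifting of a renaming under a binder. -/
def upr (ρ : ℕ → ℕ) : ℕ → ℕ
  | 0 => 0
  | n + 1 => ρ n + 1

/-- Renaming of variables. -/
def rename (ρ : ℕ → ℕ) : Tm F → Tm F
  | .var n => .var (ρ n)
  | .lam M => .lam (rename (upr ρ) M)
  | .app M N => .app (rename ρ M) (rename ρ N)
  | .fixY M => .fixY (rename ρ M)
  | .const f => .const f

/-- Shift all free variables up by one. -/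
def lift (M : Tm F) : Tm F := rename Nat.succ M

/-- Lifting of a substitution under a binder. -/
def ups (σ : ℕ → Tm F) : ℕ → Tm F
  | 0 => .var 0
  | n + 1 => lift (σ n)

/-- Simultaneous substitution. -/
def subst (σ : ℕ → Tm F) : Tm F → Tm F
  | .var n => σ n
  | .lam M => .lam (subst (ups σ) M)
  | .app M N => .app (subst σ M) (subst σ N)
  | .fixY M => .fixY (subst σ M)
  | .const f => .const f

/-- Substitution `M[N/x]` of `N` for the variable `0` in `M`. -/
def subst0 (N : Tm F) (M : Tm F) : Tm F :=
  subst (fun n => match n with | 0 => N | n + 1 => .var n) M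

/-- A term applied to a list of arguments: `appArgs M [N₁,…,Nₖ] = M N₁ ⋯ Nₖ`. -/
def appArgs (M : Tm F) : List (Tm F) → Tm F
  | [] => M
  | N :: Ns => appArgs (.app M N) Ns

end Tm

open Tm

/-- Weak head reduction: β at the head, unfolding of `Y`, and reduction of the
head of an application. -/
inductive Step {F : Type} : Tm F → Tm F → Prop
  | beta (M N : Tm F) : Step (.app (.lam M) N) (subst0 N M)
  | fix (M : Tm F) : Step (.fixY M) (.app M (.fixY M))
  | appL {M M' : Tm F} (N : Tm F) : Step M M' → Step (.app M N) (.app M' N)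

/-- A term is in weak head normal form when no weak head reduction applies. -/
def WHNF {F : Type} (M : Tm F) : Prop := ¬ ∃ N, Step M N

/-- The type `o^n → o` of a first-order constant with arity `n`. -/
def constTy : ℕ → Ty
  | 0 => .o
  | n + 1 => .arr .o (constTy n)

/-- Typing judgement for λY-terms. Contexts are lists of types (de Bruijn). -/
inductive HasTy {F : Type} (ar : F → ℕ) : List Ty → Tm F → Ty → Prop
  | var {Γ n T} : Γ[n]? = some T → HasTy ar Γ (.var n) T
  | lam {Γ M T U} : HasTy ar (T :: Γ) M U → HasTy ar Γ (.lam M) (.arr T U)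
  | app {Γ M N T U} : HasTy ar Γ M (.arr T U) → HasTy ar Γ N T →
      HasTy ar Γ (.app M N) U
  | fix {Γ M T} : HasTy ar Γ M (.arr T T) → HasTy ar Γ (.fixY M) T
  | const {Γ} (f : F) : HasTy ar Γ (.const f) (constTy (ar f))

end LamY

/-! EPCF: a fine-grained call-by-value calculus with algebraic operations and
fixpoints. The signature consists of: base types `BV`, constant values `CV`
(with `cvTy : CV → BV`), and algebraic operations `Op` with parameter base
type `opPar : Op → BV` and arity `opAr : Op → ℕ`. -/

namespace EPCF

/-- EPCF types: base types, finite enumeration types `k`, and arrows. -/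
inductive ETy (BV : Type) : Type
  | base : BV → ETy BV
  | enum : ℕ → ETy BV
  | arr : ETy BV → ETy BV → ETy BV

mutual
/-- EPCF values (de Bruijn representation). -/
inductive Val (CV Op : Type) : Type
  | cv : CV → Val CV Op                        -- constant value
  | num : ℕ → ℕ → Val CV Op                    -- `num n k` is `n̲ : k`
  | var : ℕ → Val CV Op
  | lam : Comp CV Op → Val CV Op
  | fixv : Val CV Op → Val CV Op
/-- EPCF computations (de Bruijn representation). `opc σ V C` is the algebraic
operation `σ(V; x.C)` (the continuation `C` binds `x`), and
`case k V Cs` is `case(V; C₀,…,C_{k-1})`. -/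
inductive Comp (CV Op : Type) : Type
  | app : Val CV Op → Val CV Op → Comp CV Op
  | ret : Val CV Op → Comp CV Op
  | letin : Comp CV Op → Comp CV Op → Comp CV Op
  | opc : Op → Val CV Op → Comp CV Op → Comp CV Op
  | case : (k : ℕ) → Val CV Op → (Fin k → Comp CV Op) → Comp CV Op
end

variable {CV Op : Type}

/-- Lifting of a renaming under a binder. -/
def upr (ρ : ℕ → ℕ) : ℕ → ℕ
  | 0 => 0
  | n + 1 => ρ n + 1

mutual
/-- Renaming of variables in values. -/
def renV (ρ : ℕ → ℕ) : Val CV Op → Val CV Op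
  | .cv v => .cv v
  | .num n k => .num n k
  | .var n => .var (ρ n)
  | .lam C => .lam (renC (upr ρ) C)
  | .fixv V => .fixv (renV (upr ρ) V)
/-- Renaming of variables in computations. -/
def renC (ρ : ℕ → ℕ) : Comp CV Op → Comp CV Op
  | .app V W => .app (renV ρ V) (renV ρ W)
  | .ret V => .ret (renV ρ V)
  | .letin C B => .letin (renC ρ C) (renC (upr ρ) B)
  | .opc σ V C => .opc σ (renV ρ V) (renC (upr ρ) C)
  | .case k V Cs => .case k (renV ρ V) (fun i => renC ρ (Cs i))
end

/-- Lifting of a substitution under a binder. -/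
def upsE (σ : ℕ → Val CV Op) : ℕ → Val CV Op
  | 0 => .var 0
  | n + 1 => renV Nat.succ (σ n)

mutual
/-- Simultaneous substitution of values for variables, in values. -/
def subV (σ : ℕ → Val CV Op) : Val CV Op → Val CV Op
  | .cv v => .cv v
  | .num n k => .num n k
  | .var n => σ n
  | .lam C => .lam (subC (upsE σ) C)
  | .fixv V => .fixv (subV (upsE σ) V)
/-- Simultaneous substitution of values for variables, in computations. -/
def subC (σ : ℕ → Val CV Op) : Comp CV Op → Comp CV Op
  | .app V W => .app (subV σ V) (subV σ W)
  | .ret V => .ret (subV σ V)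
  | .letin C B => .letin (subC σ C) (subC (upsE σ) B)
  | .opc op V C => .opc op (subV σ V) (subC (upsE σ) C)
  | .case k V Cs => .case k (subV σ V) (fun i => subC σ (Cs i))
end

/-- Substitution `C[W/x]` of the value `W` for the variable `0`. -/
def subst0C (W : Val CV Op) (C : Comp CV Op) : Comp CV Op :=
  subC (fun n => match n with | 0 => W | n + 1 => .var n) C

/-- Substitution `V[W/x]` of the value `W` for the variable `0`. -/
def subst0V (W : Val CV Op) (V : Val CV Op) : Val CV Op :=
  subV (fun n => match n with | 0 => W | n + 1 => .var n) V

/-- The reduction relation of EPCF. -/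
inductive EStep : Comp CV Op → Comp CV Op → Prop
  | beta (C : Comp CV Op) (W : Val CV Op) :
      EStep (.app (.lam C) W) (subst0C W C)
  | fix (V W : Val CV Op) :
      EStep (.app (.fixv V) W) (.app (subst0V (.fixv V) V) W)
  | case {n k : ℕ} (h : n < k) (Cs : Fin k → Comp CV Op) :
      EStep (.case k (.num n k) Cs) (Cs ⟨n, h⟩)
  | letRet (V : Val CV Op) (C : Comp CV Op) :
      EStep (.letin (.ret V) C) (subst0C V C)
  | letCong {C C' : Comp CV Op} (B : Comp CV Op) :
      EStep C C' → EStep (.letin C B) (.letin C' B)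
  | letOp (σ : Op) (V : Val CV Op) (C D : Comp CV Op) :
      EStep (.letin (.opc σ V C) D) (.opc σ V (.letin C (renC (upr Nat.succ) D)))

/-! Typing of EPCF. -/
section Typing

variable {BV : Type} (cvTy : CV → BV) (opPar : Op → BV) (opAr : Op → ℕ)

mutual
/-- Typing judgment for EPCF values. -/
inductive VTy : List (ETy BV) → Val CV Op → ETy BV → Prop
  | cv {Γ} (v : CV) : VTy Γ (.cv v) (.base (cvTy v))
  | num {Γ n k} : n < k → VTy Γ (.num n k) (.enum k)
  | var {Γ n T} : Γ[n]? = some T → VTy Γ (.var n) T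
  | lam {Γ C T U} : CTy (T :: Γ) C U → VTy Γ (.lam C) (.arr T U)
  | fixv {Γ V T U} : VTy ((ETy.arr T U) :: Γ) V (ETy.arr T U) →
      VTy Γ (.fixv V) (.arr T U)
/-- Typing judgment for EPCF computations. -/
inductive CTy : List (ETy BV) → Comp CV Op → ETy BV → Prop
  | app {Γ V W T U} : VTy Γ V (.arr T U) → VTy Γ W T → CTy Γ (.app V W) U
  | ret {Γ V T} : VTy Γ V T → CTy Γ (.ret V) T
  | letin {Γ C B T U} : CTy Γ C T → CTy (T :: Γ) B U →
      CTy Γ (.letin C B) U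
  | opc {Γ σ V C T} : VTy Γ V (.base (opPar σ)) →
      CTy ((ETy.enum (opAr σ)) :: Γ) C T → CTy Γ (.opc σ V C) T
  | case {Γ k V T} {Cs : Fin k → Comp CV Op} : VTy Γ V (.enum k) →
      (∀ i, CTy Γ (Cs i) T) → CTy Γ (.case k V Cs) T
end

end Typing

end EPCF

namespace EPCF

open LamY LamY.Tm

variable {CV Op : Type}

/-- The λY signature `Σ_Y = {v : 0 | v ∈ CV} ∪ {σ : k+1 | (σ : B ⇝ k) ∈ Σ}`
targeted by the CPS translation. -/
def arF (opAr : Op → ℕ) : CV ⊕ Op → ℕ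
  | .inl _ => 0
  | .inr σ => opAr σ + 1

/-- Negation `¬T = T → o` of λY types. -/
def notTy (T : Ty) : Ty := .arr T .o

/-- CPS translation of EPCF types: `B* = o`, `k* = ¬(o^k)` and
`(T → U)* = T* → ¬U* → o`. -/
def trTy {BV : Type} : ETy BV → Ty
  | .base _ => .o
  | .enum k => constTy k
  | .arr T U => .arr (trTy T) (.arr (notTy (trTy U)) .o)

/-- The λY representation `λx₀…x_{k−1}.xₙ` of the numeral `n̲ : k`. -/
def numStar (k n : ℕ) : Tm (CV ⊕ Op) :=
  (List.range k).foldr (fun _ M => .lam M) (.var (k - 1 - n))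

/-! CPS translation of EPCF terms to the λY-calculus. -/
section CPS

variable (opAr : Op → ℕ)

mutual
/-- CPS translation of values. -/
def trV (opAr : Op → ℕ) : Val CV Op → Tm (CV ⊕ Op)
  | .cv v => .const (.inl v)
  | .num n k => numStar k n
  | .var n => .var n
  | .lam C => .lam (trC opAr C)
  | .fixv V => .fixY (.lam (trV opAr V))
/-- CPS translation of computations: `C*` expects a continuation `c`. -/
def trC (opAr : Op → ℕ) : Comp CV Op → Tm (CV ⊕ Op)
  | .app V W => .lam (.app (.app (lift (trV opAr V)) (lift (trV opAr W))) (.var 0))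
  | .ret V => .lam (.app (.var 0) (lift (trV opAr V)))
  | .letin C B =>
      .lam (.app (lift (trC opAr C))
        (.lam (.app (rename (upr Nat.succ) (trC opAr B)) (.var 1))))
  | .opc σ V C =>
      .lam (appArgs (.const (.inr σ))
        (lift (trV opAr V) ::
          List.ofFn (fun i : Fin (opAr σ) =>
            .app (lift (subst0 (numStar (opAr σ) i) (trC opAr C))) (.var 0))))
  | .case k V Cs =>
      .lam (appArgs (lift (trV opAr V))
        (List.ofFn fun i : Fin k => .app (lift (trC opAr (Cs i))) (.var 0)))
end

end CPS

end EPCF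

namespace LamY

open Tm

/-- A λY-term diverges when weak head reduction from it never terminates. -/
def Diverges {F : Type} (M : Tm F) : Prop :=
  ∀ N, Relation.ReflTransGen Step M N → ∃ N', Step N N'

/-- The Böhm tree of a closed ground λY-term, described position by position:
`BTAt ar M p l` holds when the Böhm tree of `M` carries the label `l` at
position `p` (`none` standing for `⊥`). -/
inductive BTAt {F : Type} (ar : F → ℕ) : Tm F → List ℕ → Option F → Prop
  | bot {M} : Diverges M → BTAt ar M [] none
  | node {M f args} :
      Relation.ReflTransGen Step M (appArgs (.const f) args) →
      args.length = ar f → BTAt ar M [] (some f)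
  | child {M f args i Mi p l} :
      Relation.ReflTransGen Step M (appArgs (.const f) args) →
      args.length = ar f → args[i]? = some Mi →
      BTAt ar Mi p l → BTAt ar M (i :: p) l

end LamY

namespace EPCF

open LamY LamY.Tm

/-- An EPCF computation diverges when its reduction never terminates. -/
def CDiverges {CV Op : Type} (C : Comp CV Op) : Prop :=
  ∀ D, Relation.ReflTransGen EStep C D → ∃ D', EStep D D'

/-- The effect tree of a closed EPCF computation `C` in which every leaf
`return(V)` has been replaced by the Böhm tree of `c V*`, described position
by position (labels are λY constants, `none` standing for `⊥`). -/
inductive Mixed {CV Op : Type} (opAr : Op → ℕ) (c : Tm (CV ⊕ Op)) :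
    Comp CV Op → List ℕ → Option (CV ⊕ Op) → Prop
  | bot {C} : CDiverges C → Mixed opAr c C [] none
  | ret {C V p l} :
      Relation.ReflTransGen EStep C (.ret V) →
      BTAt (arF opAr) (.app c (trV opAr V)) p l → Mixed opAr c C p l
  | opHead {C σ V C'} :
      Relation.ReflTransGen EStep C (.opc σ V C') →
      Mixed opAr c C [] (some (.inr σ))
  | opParam {C σ v C'} :
      Relation.ReflTransGen EStep C (.opc σ (.cv v) C') →
      Mixed opAr c C [0] (some (.inl v))
  | opChild {C σ V C' i p l} :
      Relation.ReflTransGen EStep C (.opc σ V C') →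
      i < opAr σ →
      Mixed opAr c (subst0C (.num i (opAr σ)) C') p l →
      Mixed opAr c C ((i + 1) :: p) l

end EPCF


/-!
A closed well-typed computation either diverges, reduces to `return V`, or reduces to an
operation `σ(v; x.C')`, and the theorem follows by induction on the position once the
translation is known to respect EPCF reduction: if `C ⟶ D` then `C* d` and `D* d` have the same
Böhm tree. For the redex steps `C* d` and `D* d` have a common weak head reduct; for the
commuting conversion `let σ(v; x.C) in D ⟶ σ(v; x. let C in D)` both sides become `σ`-nodes
whose children are one β-step apart. Divergence is transferred by counting steps: a divergent
computation never performs the commuting conversion, and for every other step the common reduct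
is reached from `D* d` in fewer steps than from `C* d`.
-/

namespace Relation

variable {α : Type*} {r : α → α → Prop} {a b c : α}

theorem ReflTransGen.eq_of_not_rel (h : ReflTransGen r a b) (ha : ∀ c, ¬ r a c) : b = a := by
  rcases h.cases_head with rfl | ⟨c, hac, -⟩
  · rfl
  · exact absurd hac (ha c)

theorem ReflTransGen.of_rel_of_not_rel (hr : Relator.RightUnique r) (hac : r a c)
    (hab : ReflTransGen r a b) (hb : ∀ d, ¬ r b d) : ReflTransGen r c b := by
  rcases hab.cases_head with rfl | ⟨c', hac', hc'b⟩
  · exact absurd hac (hb c)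
  · rwa [hr hac hac']

theorem ReflTransGen.eq_of_not_rel_of_not_rel (hr : Relator.RightUnique r)
    (hab : ReflTransGen r a b) (hac : ReflTransGen r a c) (hb : ∀ d, ¬ r b d)
    (hc : ∀ d, ¬ r c d) : b = c := by
  rcases ReflTransGen.total_of_right_unique hr hab hac with hbc | hcb
  · exact (hbc.eq_of_not_rel hb).symm
  · exact hcb.eq_of_not_rel hc

inductive NSteps (r : α → α → Prop) : α → ℕ → α → Prop
  | refl (a : α) : NSteps r a 0 a
  | head {a b n c} : r a b → NSteps r b n c → NSteps r a (n + 1) c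

namespace NSteps

theorem reflTransGen {n : ℕ} (h : NSteps r a n b) : ReflTransGen r a b := by
  induction h with
  | refl => exact .refl
  | head hab _ ih => exact .head hab ih

theorem trans {m n : ℕ} (hab : NSteps r a m b) (hbc : NSteps r b n c) :
    NSteps r a (m + n) c := by
  induction hab with
  | refl => simpa using hbc
  | head hab _ ih => rw [Nat.add_right_comm]; exact .head hab (ih hbc)

theorem sub_of_not_rel (hr : Relator.RightUnique r) {m n : ℕ} (hab : NSteps r a m b)
    (hac : NSteps r a n c) (hc : ∀ d, ¬ r c d) : m ≤ n ∧ NSteps r b (n - m) c := by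
  induction hab generalizing n with
  | refl => simpa using hac
  | head hab _ ih =>
    cases hac with
    | refl => exact absurd hab (hc _)
    | head hab' hac =>
      rw [hr hab hab'] at ih
      obtain ⟨hle, h⟩ := ih hac
      exact ⟨by omega, by simpa using h⟩

end NSteps

theorem ReflTransGen.exists_nSteps (h : ReflTransGen r a b) : ∃ n, NSteps r a n b := by
  induction h using ReflTransGen.head_induction_on with
  | refl => exact ⟨0, .refl _⟩
  | head hab _ ih => obtain ⟨n, h⟩ := ih; exact ⟨n + 1, .head hab h⟩

end Relation

namespace LamY

open Relation

namespace Tm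

variable {F : Type}

@[simp] theorem upr_zero (ρ : ℕ → ℕ) : upr ρ 0 = 0 := rfl
@[simp] theorem upr_succ (ρ : ℕ → ℕ) (n : ℕ) : upr ρ (n + 1) = ρ n + 1 := rfl
@[simp] theorem ups_zero (σ : ℕ → Tm F) : ups σ 0 = .var 0 := rfl
@[simp] theorem ups_succ (σ : ℕ → Tm F) (n : ℕ) : ups σ (n + 1) = lift (σ n) := rfl

theorem rename_rename (ρ ρ' : ℕ → ℕ) (M : Tm F) :
    rename ρ (rename ρ' M) = rename (ρ ∘ ρ') M := by
  induction M generalizing ρ ρ' with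
  | lam M ih =>
    simp only [rename, ih]
    congr 2; funext n; cases n <;> rfl
  | _ => simp_all [rename]

theorem subst_rename (σ : ℕ → Tm F) (ρ : ℕ → ℕ) (M : Tm F) :
    subst σ (rename ρ M) = subst (σ ∘ ρ) M := by
  induction M generalizing σ ρ with
  | lam M ih =>
    simp only [rename, subst, ih]
    congr 2; funext n; cases n <;> rfl
  | _ => simp_all [rename, subst]

theorem rename_subst (ρ : ℕ → ℕ) (σ : ℕ → Tm F) (M : Tm F) :
    rename ρ (subst σ M) = subst (rename ρ ∘ σ) M := by
  induction M generalizing σ ρ with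
  | lam M ih =>
    simp only [rename, subst, ih]
    congr 2; funext n; cases n with
    | zero => rfl
    | succ n => simp only [Function.comp, ups_succ, lift, rename_rename]; rfl
  | _ => simp_all [rename, subst]

theorem subst_subst (τ σ : ℕ → Tm F) (M : Tm F) :
    subst τ (subst σ M) = subst (subst τ ∘ σ) M := by
  induction M generalizing σ τ with
  | lam M ih =>
    simp only [subst, ih]
    congr 2; funext n; cases n with
    | zero => rfl
    | succ n => simp only [Function.comp, ups_succ, lift, subst_rename, rename_subst]; rfl
  | _ => simp_all [subst]

theorem rename_eq_subst (ρ : ℕ → ℕ) (M : Tm F) : rename ρ M = subst (.var ∘ ρ) M := by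
  induction M generalizing ρ with
  | lam M ih =>
    simp only [rename, subst, ih]
    congr 2; funext n; cases n <;> rfl
  | _ => simp_all [rename, subst]

@[simp] theorem upr_id : upr (fun n => n) = fun n => n := by
  funext n; cases n <;> rfl

@[simp] theorem rename_id (M : Tm F) : rename (fun n => n) M = M := by
  induction M with
  | lam M ih => simp only [rename, upr_id, ih]
  | _ => simp_all [rename]

@[simp] theorem subst_var (M : Tm F) : subst .var M = M :=
  (rename_eq_subst (fun n => n) M).symm.trans (rename_id M)

@[simp] theorem subst0_lift (N M : Tm F) : subst0 N (lift M) = M := by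
  rw [subst0, lift, subst_rename]
  exact subst_var M

theorem subst_appArgs (σ : ℕ → Tm F) (M : Tm F) (Ns : List (Tm F)) :
    subst σ (appArgs M Ns) = appArgs (subst σ M) (Ns.map (subst σ)) := by
  induction Ns generalizing M with
  | nil => rfl
  | cons N Ns ih => simp only [appArgs, List.map_cons, ih, subst]

@[simp] theorem subst0_app (N M M' : Tm F) :
    subst0 N (.app M M') = .app (subst0 N M) (subst0 N M') := rfl

@[simp] theorem subst0_var_zero (N : Tm F) : subst0 N (.var 0) = N := rfl

@[simp] theorem subst0_const (N : Tm F) (f : F) : subst0 N (.const f) = .const f := rfl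

theorem subst0_appArgs (N M : Tm F) (Ms : List (Tm F)) :
    subst0 N (appArgs M Ms) = appArgs (subst0 N M) (Ms.map (subst0 N)) :=
  subst_appArgs _ M Ms

theorem subst0_lam_rename_upr_succ (N M : Tm F) :
    subst0 N (.lam (.app (rename (upr Nat.succ) M) (.var 1))) = .lam (.app M (lift N)) := by
  simp only [subst0, subst, subst_rename]
  congr
  convert subst_var M
  funext n; cases n <;> rfl

theorem subst_subst0 (τ : ℕ → Tm F) (N M : Tm F) :
    subst τ (subst0 N M) = subst0 (subst τ N) (subst (ups τ) M) := by
  simp only [subst0, subst_subst]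
  congr 1; funext n; cases n with
  | zero => rfl
  | succ n => simp only [Function.comp, ups_succ, lift, subst_rename]; exact (subst_var _).symm

theorem rename_subst0 (ρ : ℕ → ℕ) (N M : Tm F) :
    rename ρ (subst0 N M) = subst0 (rename ρ N) (rename (upr ρ) M) := by
  simp only [subst0, rename_subst, subst_rename]
  congr 1; funext n; cases n <;> rfl

theorem rename_upr_lift (ρ : ℕ → ℕ) (M : Tm F) :
    rename (upr ρ) (lift M) = lift (rename ρ M) := by
  simp only [lift, rename_rename]; rfl

theorem subst_ups_lift (σ : ℕ → Tm F) (M : Tm F) :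
    subst (ups σ) (lift M) = lift (subst σ M) := by
  simp only [lift, subst_rename, rename_subst]; rfl

theorem rename_upr_upr_rename_upr_succ (ρ : ℕ → ℕ) (M : Tm F) :
    rename (upr (upr ρ)) (rename (upr Nat.succ) M) =
      rename (upr Nat.succ) (rename (upr ρ) M) := by
  simp only [rename_rename]
  congr 1; funext n; cases n <;> rfl

theorem subst_ups_ups_rename_upr_succ (σ : ℕ → Tm F) (M : Tm F) :
    subst (ups (ups σ)) (rename (upr Nat.succ) M) =
      rename (upr Nat.succ) (subst (ups σ) M) := by
  simp only [subst_rename, rename_subst]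
  congr 1; funext n; cases n with
  | zero => rfl
  | succ n => simp only [Function.comp, upr_succ, ups_succ, lift, rename_rename]; rfl

theorem rename_appArgs (ρ : ℕ → ℕ) (M : Tm F) (Ns : List (Tm F)) :
    rename ρ (appArgs M Ns) = appArgs (rename ρ M) (Ns.map (rename ρ)) := by
  induction Ns generalizing M with
  | nil => rfl
  | cons N Ns ih => simp only [appArgs, List.map_cons, ih, rename]

theorem appArgs_append (M : Tm F) (Ns Ns' : List (Tm F)) :
    appArgs M (Ns ++ Ns') = appArgs (appArgs M Ns) Ns' := by
  induction Ns generalizing M with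
  | nil => rfl
  | cons N Ns ih => exact ih _

theorem appArgs_const_injective {f g : F} {Ms Ns : List (Tm F)}
    (h : appArgs (.const f) Ms = appArgs (.const g) Ns) : f = g ∧ Ms = Ns := by
  induction Ms using List.reverseRecOn generalizing Ns with
  | nil =>
    cases Ns using List.reverseRecOn with
    | nil => cases h; exact ⟨rfl, rfl⟩
    | append_singleton Ns N _ => simp [appArgs_append, appArgs] at h
  | append_singleton Ms M ih =>
    cases Ns using List.reverseRecOn with
    | nil => simp [appArgs_append, appArgs] at h
    | append_singleton Ns N _ =>
      simp only [appArgs_append, appArgs, Tm.app.injEq] at h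
      obtain ⟨rfl, rfl⟩ := ih h.1
      exact ⟨rfl, by rw [h.2]⟩

end Tm

open Tm

theorem step_rightUnique : Relator.RightUnique (@Step F) := by
  intro M N N' h h'
  induction h generalizing N' with
  | beta => cases h' with
    | beta => rfl
    | appL _ h => cases h
  | fix => cases h'; rfl
  | appL N hs ih => cases h' with
    | beta => cases hs
    | appL _ h => rw [ih h]

theorem Step.appArgs {M M' : Tm F} (h : Step M M') (Ns : List (Tm F)) :
    Step (appArgs M Ns) (appArgs M' Ns) := by
  induction Ns generalizing M M' with
  | nil => exact h
  | cons N Ns ih => exact ih (.appL N h)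

theorem not_step_appArgs {M : Tm F} (hM : ∀ N, ¬ Step M N) (hlam : ∀ B, M ≠ .lam B)
    (Ns : List (Tm F)) (N : Tm F) : ¬ Step (appArgs M Ns) N := by
  induction Ns generalizing M with
  | nil => exact hM N
  | cons N' Ns ih =>
    refine ih (fun K hK => ?_) (fun B h => by cases h)
    cases hK with
    | beta B _ => exact hlam B rfl
    | appL _ h => exact hM _ h

theorem not_step_appArgs_const (f : F) (Ns : List (Tm F)) (N : Tm F) :
    ¬ Step (appArgs (.const f) Ns) N :=
  not_step_appArgs (fun _ h => by cases h) (fun _ h => by cases h) Ns N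

theorem Diverges.of_step {M M' : Tm F} (h : Step M M') (hd : Diverges M') : Diverges M := by
  intro N hN
  rcases hN.cases_head with rfl | ⟨M'', h', hN⟩
  · exact ⟨M', h⟩
  · rw [step_rightUnique h' h] at hN
    exact hd N hN

theorem Diverges.not_reflTransGen_appArgs_const {M : Tm F} (hd : Diverges M) (f : F)
    (Ns : List (Tm F)) : ¬ ReflTransGen Step M (appArgs (.const f) Ns) := fun h =>
  let ⟨_, hs⟩ := hd _ h
  not_step_appArgs_const f Ns _ hs

variable {ar : F → ℕ}

theorem btAt_iff_of_step {M M' : Tm F} (h : Step M M') (p : List ℕ) (l : Option F) :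
    BTAt ar M p l ↔ BTAt ar M' p l := by
  have hnf := not_step_appArgs_const (F := F)
  constructor
  · rintro (⟨hd⟩ | ⟨hr, hl⟩ | ⟨hr, hl, hi, hb⟩)
    · exact .bot fun N hN => hd N (.head h hN)
    · exact .node (hr.of_rel_of_not_rel step_rightUnique h (hnf _ _)) hl
    · exact .child (hr.of_rel_of_not_rel step_rightUnique h (hnf _ _)) hl hi hb
  · rintro (⟨hd⟩ | ⟨hr, hl⟩ | ⟨hr, hl, hi, hb⟩)
    · exact .bot (hd.of_step h)
    · exact .node (.head h hr) hl
    · exact .child (.head h hr) hl hi hb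

theorem btAt_iff_of_reflTransGen {M M' : Tm F} (h : ReflTransGen Step M M') (p : List ℕ)
    (l : Option F) : BTAt ar M p l ↔ BTAt ar M' p l := by
  induction h using ReflTransGen.head_induction_on with
  | refl => rfl
  | head hs _ ih => exact (btAt_iff_of_step hs p l).trans ih

theorem btAt_iff_of_diverges {M : Tm F} (hd : Diverges M) (p : List ℕ) (l : Option F) :
    BTAt ar M p l ↔ p = [] ∧ l = none := by
  constructor
  · rintro (_ | ⟨hr, -⟩ | ⟨hr, -, -, -⟩)
    · exact ⟨rfl, rfl⟩
    all_goals exact (hd.not_reflTransGen_appArgs_const _ _ hr).elim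
  · rintro ⟨rfl, rfl⟩
    exact .bot hd

theorem eq_of_reflTransGen_appArgs_const {f g : F} {Ms Ns : List (Tm F)}
    (h : ReflTransGen Step (appArgs (.const f) Ms) (appArgs (.const g) Ns)) :
    f = g ∧ Ms = Ns :=
  appArgs_const_injective (h.eq_of_not_rel (not_step_appArgs_const f Ms)).symm

theorem btAt_appArgs_const_nil {f : F} {Ns : List (Tm F)} (hl : Ns.length = ar f)
    (l : Option F) : BTAt ar (appArgs (.const f) Ns) [] l ↔ l = some f := by
  constructor
  · rintro (⟨hd⟩ | ⟨hr, -⟩)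
    · exact (hd.not_reflTransGen_appArgs_const f Ns .refl).elim
    · rw [(eq_of_reflTransGen_appArgs_const hr).1]
  · rintro rfl
    exact .node .refl hl

theorem btAt_appArgs_const_cons {f : F} {Ns : List (Tm F)} (hl : Ns.length = ar f)
    (i : ℕ) (p : List ℕ) (l : Option F) :
    BTAt ar (appArgs (.const f) Ns) (i :: p) l ↔ ∃ N, Ns[i]? = some N ∧ BTAt ar N p l := by
  constructor
  · rintro (_ | _ | ⟨hr, -, hi, hb⟩)
    obtain ⟨rfl, rfl⟩ := eq_of_reflTransGen_appArgs_const hr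
    exact ⟨_, hi, hb⟩
  · rintro ⟨N, hi, hb⟩
    exact .child .refl hl hi hb

theorem btAt_const {f : F} (hf : ar f = 0) (p : List ℕ) (l : Option F) :
    BTAt ar (.const f) p l ↔ p = [] ∧ l = some f := by
  cases p with
  | nil => exact (btAt_appArgs_const_nil (Ns := []) hf.symm l).trans (by simp)
  | cons i q => exact (btAt_appArgs_const_cons (Ns := []) hf.symm i q l).trans (by simp)

theorem btAt_appArgs_const_congr {f : F} {Ms Ns : List (Tm F)} (hM : Ms.length = ar f)
    (hN : Ns.length = ar f)
    (h : ∀ i (hi : i < Ms.length) (hi' : i < Ns.length) p l, BTAt ar Ms[i] p l ↔ BTAt ar Ns[i] p l)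
    (p : List ℕ) (l : Option F) :
    BTAt ar (appArgs (.const f) Ms) p l ↔ BTAt ar (appArgs (.const f) Ns) p l := by
  cases p with
  | nil => rw [btAt_appArgs_const_nil hM, btAt_appArgs_const_nil hN]
  | cons i q =>
    rw [btAt_appArgs_const_cons hM, btAt_appArgs_const_cons hN]
    simp only [List.getElem?_eq_some_iff]
    constructor
    · rintro ⟨_, ⟨hi, rfl⟩, hb⟩
      exact ⟨_, ⟨by omega, rfl⟩, (h i hi (by omega) q l).1 hb⟩
    · rintro ⟨_, ⟨hi, rfl⟩, hb⟩
      exact ⟨_, ⟨by omega, rfl⟩, (h i (by omega) hi q l).2 hb⟩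

namespace Tm

theorem subst_iterate_lam (σ : ℕ → Tm F) (k : ℕ) (M : Tm F) :
    subst σ (lam^[k] M) = lam^[k] (subst (ups^[k] σ) M) := by
  induction k generalizing σ with
  | zero => rfl
  | succ k ih =>
    rw [Function.iterate_succ_apply' (f := Tm.lam), Function.iterate_succ_apply' (f := Tm.lam),
      subst, ih, Function.iterate_succ_apply]

theorem rename_iterate_lam (ρ : ℕ → ℕ) (k : ℕ) (M : Tm F) :
    rename ρ (lam^[k] M) = lam^[k] (rename (upr^[k] ρ) M) := by
  induction k generalizing ρ with
  | zero => rfl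
  | succ k ih =>
    rw [Function.iterate_succ_apply' (f := Tm.lam), Function.iterate_succ_apply' (f := Tm.lam),
      rename, ih, Function.iterate_succ_apply]

theorem iterate_ups_of_lt (σ : ℕ → Tm F) {k n : ℕ} (h : n < k) : (ups^[k] σ) n = .var n := by
  induction k generalizing n with
  | zero => omega
  | succ k ih =>
    rw [Function.iterate_succ_apply']
    cases n with
    | zero => rfl
    | succ n => rw [ups_succ, ih (by omega)]; rfl

theorem iterate_upr_of_lt (ρ : ℕ → ℕ) {k n : ℕ} (h : n < k) : (upr^[k] ρ) n = n := by
  induction k generalizing n with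
  | zero => omega
  | succ k ih =>
    rw [Function.iterate_succ_apply']
    cases n with
    | zero => rfl
    | succ n => rw [upr_succ, ih (by omega)]

theorem iterate_ups_add (σ : ℕ → Tm F) (k j : ℕ) :
    (ups^[k] σ) (k + j) = rename (· + k) (σ j) := by
  induction k with
  | zero => simp
  | succ k ih =>
    rw [Function.iterate_succ_apply', show k + 1 + j = k + j + 1 by omega, ups_succ, ih, lift,
      rename_rename]
    rfl

theorem step_app_iterate_lam (k : ℕ) (M N : Tm F) :
    Step (.app (lam^[k + 1] M) N)
      (lam^[k] (subst (ups^[k] fun n => match n with | 0 => N | n + 1 => .var n) M)) := by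
  rw [Function.iterate_succ_apply', ← subst_iterate_lam]
  exact .beta _ _

theorem reflTransGen_appArgs_iterate_lam_rename (N : Tm F) (Ns : List (Tm F)) :
    ReflTransGen Step (appArgs (lam^[Ns.length] (rename (· + Ns.length) N)) Ns) N := by
  induction Ns with
  | nil => simpa [appArgs] using ReflTransGen.refl
  | cons N' Ns ih =>
    refine .head ((step_app_iterate_lam _ _ N').appArgs Ns) ?_
    convert ih using 4
    rw [subst_rename, rename_eq_subst]
    congr 1; funext i
    simp only [Function.comp, List.length_cons,
      show i + (Ns.length + 1) = Ns.length + (i + 1) by omega, iterate_ups_add]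
    rfl

theorem reflTransGen_appArgs_iterate_lam_var {Ns : List (Tm F)} {n : ℕ} {N : Tm F}
    (hN : Ns[n]? = some N) :
    ReflTransGen Step (appArgs (lam^[Ns.length] (.var (Ns.length - 1 - n))) Ns) N := by
  induction Ns generalizing n with
  | nil => simp at hN
  | cons N' Ns ih =>
    refine .head ((step_app_iterate_lam _ _ N').appArgs Ns) ?_
    cases n with
    | zero =>
      cases hN
      have h := iterate_ups_add (fun n => match n with | 0 => N | n + 1 => .var n) Ns.length 0
      rw [Nat.add_zero] at h
      simpa [subst, h] using reflTransGen_appArgs_iterate_lam_rename N Ns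
    | succ n =>
      rw [List.getElem?_cons_succ] at hN
      have hn : n < Ns.length := (List.getElem?_eq_some_iff.1 hN).1
      simpa [subst, show Ns.length - (n + 1) = Ns.length - 1 - n by omega,
        iterate_ups_of_lt _ (show Ns.length - 1 - n < Ns.length by omega)] using ih hN

end Tm

end LamY

namespace EPCF

open Relation

variable {CV Op : Type}

theorem upsE_comp_upr (σ : ℕ → Val CV Op) (ρ : ℕ → ℕ) : upsE σ ∘ upr ρ = upsE (σ ∘ ρ) := by
  funext n; cases n <;> rfl

theorem upsE_var : upsE (.var : ℕ → Val CV Op) = .var := by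
  funext n; cases n <;> rfl

mutual
theorem subV_renV (σ : ℕ → Val CV Op) (ρ : ℕ → ℕ) :
    ∀ V : Val CV Op, subV σ (renV ρ V) = subV (σ ∘ ρ) V
  | .cv _ | .num _ _ | .var _ => rfl
  | .lam C => by simp only [renV, subV, subC_renC _ _ C, upsE_comp_upr]
  | .fixv V => by simp only [renV, subV, subV_renV _ _ V, upsE_comp_upr]

theorem subC_renC (σ : ℕ → Val CV Op) (ρ : ℕ → ℕ) :
    ∀ C : Comp CV Op, subC σ (renC ρ C) = subC (σ ∘ ρ) C
  | .app V W => by simp only [renC, subC, subV_renV _ _ V, subV_renV _ _ W]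
  | .ret V => by simp only [renC, subC, subV_renV _ _ V]
  | .letin C B => by simp only [renC, subC, subC_renC _ _ C, subC_renC _ _ B, upsE_comp_upr]
  | .opc _ V C => by simp only [renC, subC, subV_renV _ _ V, subC_renC _ _ C, upsE_comp_upr]
  | .case _ V Cs => by simp only [renC, subC, subV_renV _ _ V, fun i => subC_renC σ ρ (Cs i)]
end

mutual
@[simp] theorem subV_var : ∀ V : Val CV Op, subV .var V = V
  | .cv _ | .num _ _ | .var _ => rfl
  | .lam C => by simp only [subV, upsE_var, subC_var C]
  | .fixv V => by simp only [subV, upsE_var, subV_var V]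

@[simp] theorem subC_var : ∀ C : Comp CV Op, subC .var C = C
  | .app V W => by simp only [subC, subV_var V, subV_var W]
  | .ret V => by simp only [subC, subV_var V]
  | .letin C B => by simp only [subC, upsE_var, subC_var C, subC_var B]
  | .opc _ V C => by simp only [subC, upsE_var, subV_var V, subC_var C]
  | .case _ V Cs => by simp only [subC, subV_var V, fun i => subC_var (Cs i)]
end

theorem subst0C_letin (W : Val CV Op) (C D : Comp CV Op) :
    subst0C W (.letin C (renC (upr Nat.succ) D)) = .letin (subst0C W C) D := by
  simp only [subst0C, subC, subC_renC]
  congr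
  convert subC_var D
  funext n; cases n <;> rfl

theorem not_estep_ret (V : Val CV Op) (D : Comp CV Op) : ¬ EStep (.ret V) D := nofun

theorem not_estep_opc (σ : Op) (V : Val CV Op) (C D : Comp CV Op) :
    ¬ EStep (.opc σ V C) D := nofun

theorem estep_rightUnique : Relator.RightUnique (@EStep CV Op) := by
  intro C D D' h h'
  induction h generalizing D' with
  | letRet => cases h' with
    | letRet => rfl
    | letCong _ h => exact absurd h (not_estep_ret _ _)
  | letCong B hs ih => cases h' with
    | letRet => exact absurd hs (not_estep_ret _ _)
    | letCong _ h => rw [ih h]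
    | letOp => exact absurd hs (not_estep_opc _ _ _ _)
  | letOp => cases h' with
    | letOp => rfl
    | letCong _ h => exact absurd h (not_estep_opc _ _ _ _)
  | _ => cases h'; rfl

theorem reflTransGen_letin {C C' : Comp CV Op} (h : ReflTransGen EStep C C') (B : Comp CV Op) :
    ReflTransGen EStep (.letin C B) (.letin C' B) := by
  induction h with
  | refl => exact .refl
  | tail _ hs ih => exact ih.tail (.letCong B hs)

theorem CDiverges.of_estep {C D : Comp CV Op} (hd : CDiverges C) (h : EStep C D) :
    CDiverges D :=
  fun E hE => hd E (.head h hE)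

theorem CDiverges.not_reflTransGen_opc {C : Comp CV Op} (hd : CDiverges C) (σ : Op)
    (V : Val CV Op) (C' : Comp CV Op) : ¬ ReflTransGen EStep C (.opc σ V C') := fun h =>
  let ⟨_, hs⟩ := hd _ h
  not_estep_opc _ _ _ _ hs

theorem CDiverges.not_reflTransGen_ret {C : Comp CV Op} (hd : CDiverges C) (V : Val CV Op) :
    ¬ ReflTransGen EStep C (.ret V) := fun h =>
  let ⟨_, hs⟩ := hd _ h
  not_estep_ret _ _ hs

variable {BV : Type} {cvTy : CV → BV} {opPar : Op → BV} {opAr : Op → ℕ}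

theorem getElem?_cons_upr {Γ Δ : List (ETy BV)} {ρ : ℕ → ℕ}
    (hρ : ∀ n U, Γ[n]? = some U → Δ[ρ n]? = some U) (T : ETy BV) :
    ∀ n U, (T :: Γ)[n]? = some U → (T :: Δ)[upr ρ n]? = some U
  | 0, _, hn => hn
  | n + 1, U, hn => hρ n U hn

mutual
theorem VTy.renV {Γ Δ : List (ETy BV)} {V : Val CV Op} {T : ETy BV} {ρ : ℕ → ℕ}
    (hρ : ∀ n U, Γ[n]? = some U → Δ[ρ n]? = some U) :
    VTy cvTy opPar opAr Γ V T → VTy cvTy opPar opAr Δ (EPCF.renV ρ V) T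
  | .cv v => .cv v
  | .num hk => .num hk
  | .var hn => .var (hρ _ _ hn)
  | .lam hC => .lam (hC.renC (getElem?_cons_upr hρ _))
  | .fixv hV => .fixv (hV.renV (getElem?_cons_upr hρ _))

theorem CTy.renC {Γ Δ : List (ETy BV)} {C : Comp CV Op} {T : ETy BV} {ρ : ℕ → ℕ}
    (hρ : ∀ n U, Γ[n]? = some U → Δ[ρ n]? = some U) :
    CTy cvTy opPar opAr Γ C T → CTy cvTy opPar opAr Δ (EPCF.renC ρ C) T
  | .app hV hW => .app (hV.renV hρ) (hW.renV hρ)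
  | .ret hV => .ret (hV.renV hρ)
  | .letin hC hB => .letin (hC.renC hρ) (hB.renC (getElem?_cons_upr hρ _))
  | .opc hV hC => .opc (hV.renV hρ) (hC.renC (getElem?_cons_upr hρ _))
  | .case hV hCs => .case (hV.renV hρ) fun i => (hCs i).renC hρ
end

theorem VTy.upsE_lookup {Γ Δ : List (ETy BV)} {σ : ℕ → Val CV Op}
    (hσ : ∀ n U, Γ[n]? = some U → VTy cvTy opPar opAr Δ (σ n) U) (T : ETy BV) :
    ∀ n U, (T :: Γ)[n]? = some U → VTy cvTy opPar opAr (T :: Δ) (EPCF.upsE σ n) U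
  | 0, _, hn => .var hn
  | n + 1, U, hn => (hσ n U hn).renV fun _ _ h => h

mutual
theorem VTy.subV {Γ Δ : List (ETy BV)} {V : Val CV Op} {T : ETy BV} {σ : ℕ → Val CV Op}
    (hσ : ∀ n U, Γ[n]? = some U → VTy cvTy opPar opAr Δ (σ n) U) :
    VTy cvTy opPar opAr Γ V T → VTy cvTy opPar opAr Δ (EPCF.subV σ V) T
  | .cv v => .cv v
  | .num hk => .num hk
  | .var hn => hσ _ _ hn
  | .lam hC => .lam (hC.subC (VTy.upsE_lookup hσ _))
  | .fixv hV => .fixv (hV.subV (VTy.upsE_lookup hσ _))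

theorem CTy.subC {Γ Δ : List (ETy BV)} {C : Comp CV Op} {T : ETy BV} {σ : ℕ → Val CV Op}
    (hσ : ∀ n U, Γ[n]? = some U → VTy cvTy opPar opAr Δ (σ n) U) :
    CTy cvTy opPar opAr Γ C T → CTy cvTy opPar opAr Δ (EPCF.subC σ C) T
  | .app hV hW => .app (hV.subV hσ) (hW.subV hσ)
  | .ret hV => .ret (hV.subV hσ)
  | .letin hC hB => .letin (hC.subC hσ) (hB.subC (VTy.upsE_lookup hσ _))
  | .opc hV hC => .opc (hV.subV hσ) (hC.subC (VTy.upsE_lookup hσ _))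
  | .case hV hCs => .case (hV.subV hσ) fun i => (hCs i).subC hσ
end

theorem VTy.subst0_lookup {Γ : List (ETy BV)} {W : Val CV Op} {T : ETy BV}
    (hW : VTy cvTy opPar opAr Γ W T) :
    ∀ n U, (T :: Γ)[n]? = some U →
      VTy cvTy opPar opAr Γ ((fun n => match n with | 0 => W | n + 1 => .var n) n) U
  | 0, U, hn => by cases hn; exact hW
  | n + 1, U, hn => .var hn

theorem CTy.subst0C {Γ : List (ETy BV)} {C : Comp CV Op} {W : Val CV Op} {T U : ETy BV}
    (hC : CTy cvTy opPar opAr (T :: Γ) C U) (hW : VTy cvTy opPar opAr Γ W T) :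
    CTy cvTy opPar opAr Γ (EPCF.subst0C W C) U :=
  hC.subC hW.subst0_lookup

theorem VTy.subst0V {Γ : List (ETy BV)} {V W : Val CV Op} {T U : ETy BV}
    (hV : VTy cvTy opPar opAr (T :: Γ) V U) (hW : VTy cvTy opPar opAr Γ W T) :
    VTy cvTy opPar opAr Γ (EPCF.subst0V W V) U :=
  hV.subV hW.subst0_lookup

theorem CTy.of_estep {Γ : List (ETy BV)} {C D : Comp CV Op} {T : ETy BV}
    (h : CTy cvTy opPar opAr Γ C T) (hs : EStep C D) : CTy cvTy opPar opAr Γ D T := by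
  induction hs generalizing T with
  | beta =>
    cases h with | app hV hW => cases hV with | lam hC => exact hC.subst0C hW
  | fix =>
    cases h with | app hV hW => cases hV with | fixv hV => exact .app (hV.subst0V (.fixv hV)) hW
  | case =>
    cases h with | case _ hCs => exact hCs _
  | letRet =>
    cases h with | letin hC hB => cases hC with | ret hV => exact hB.subst0C hV
  | letCong B _ ih =>
    cases h with | letin hC hB => exact .letin (ih hC) hB
  | letOp =>
    cases h with
    | letin hC hB => cases hC with
      | opc hV hC =>
        exact .opc hV (.letin hC
          (hB.renC (getElem?_cons_upr (ρ := Nat.succ) (Δ := _ :: _) (fun _ _ h => h) _)))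

theorem CTy.of_reflTransGen {Γ : List (ETy BV)} {C D : Comp CV Op} {T : ETy BV}
    (h : CTy cvTy opPar opAr Γ C T) (hs : ReflTransGen EStep C D) :
    CTy cvTy opPar opAr Γ D T := by
  induction hs with
  | refl => exact h
  | tail _ hs ih => exact ih.of_estep hs

theorem VTy.exists_eq_cv {V : Val CV Op} {B : BV}
    (h : VTy cvTy opPar opAr [] V (.base B)) : ∃ v, V = .cv v := by
  rcases h with _ | _ | ⟨⟨⟩⟩
  exact ⟨_, rfl⟩

theorem CTy.progress {C : Comp CV Op} {T : ETy BV} :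
    CTy cvTy opPar opAr [] C T → (∃ V, C = .ret V) ∨ (∃ σ V C', C = .opc σ V C') ∨ ∃ D, EStep C D
  | .ret _ => .inl ⟨_, rfl⟩
  | .opc _ _ => .inr (.inl ⟨_, _, _, rfl⟩)
  | .app (.lam _) _ => .inr (.inr ⟨_, .beta _ _⟩)
  | .app (.fixv _) _ => .inr (.inr ⟨_, .fix _ _⟩)
  | .case (.num hn) _ => .inr (.inr ⟨_, .case hn _⟩)
  | .letin hC _ =>
    match hC.progress with
    | .inl ⟨_, h⟩ => by subst h; exact .inr (.inr ⟨_, .letRet _ _⟩)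
    | .inr (.inl ⟨_, _, _, h⟩) => by subst h; exact .inr (.inr ⟨_, .letOp _ _ _ _⟩)
    | .inr (.inr ⟨_, hD⟩) => .inr (.inr ⟨_, .letCong _ hD⟩)

theorem CTy.cdiverges_or_reduces {C : Comp CV Op} {T : ETy BV} (h : CTy cvTy opPar opAr [] C T) :
    CDiverges C ∨ (∃ V, ReflTransGen EStep C (.ret V)) ∨
      ∃ σ V C', ReflTransGen EStep C (.opc σ V C') := by
  by_contra! hC
  obtain ⟨hC, hret, hopc⟩ := hC
  obtain ⟨D, hD, hDn⟩ : ∃ D, ReflTransGen EStep C D ∧ ∀ E, ¬ EStep D E := by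
    simpa [CDiverges] using hC
  rcases (h.of_reflTransGen hD).progress with ⟨V, rfl⟩ | ⟨σ, V, C', rfl⟩ | ⟨E, hE⟩
  exacts [hret V hD, hopc σ V C' hD, hDn E hE]

open LamY LamY.Tm

theorem upr_eq_tm_upr : EPCF.upr = LamY.Tm.upr := by
  funext ρ n; cases n <;> rfl

theorem numStar_eq (k n : ℕ) :
    (numStar k n : Tm (CV ⊕ Op)) = Tm.lam^[k] (.var (k - 1 - n)) := by
  rw [numStar, List.foldr_const, List.length_range]

theorem trV_num (n k : ℕ) : trV opAr (.num n k : Val CV Op) = numStar k n := rfl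

@[simp] theorem rename_numStar (ρ : ℕ → ℕ) {k : ℕ} (i : Fin k) :
    rename ρ (numStar k i : Tm (CV ⊕ Op)) = numStar k i := by
  rw [numStar_eq, rename_iterate_lam, rename, iterate_upr_of_lt ρ (by omega)]

@[simp] theorem subst_numStar (σ : ℕ → Tm (CV ⊕ Op)) {k : ℕ} (i : Fin k) :
    subst σ (numStar k i : Tm (CV ⊕ Op)) = numStar k i := by
  rw [numStar_eq, subst_iterate_lam, subst, iterate_ups_of_lt σ (by omega)]

-- Typing guarantees `n < k` in every numeral `n̲ : k`, which makes its translation closed: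
-- `numStar 0 n` is the free variable `0`.
mutual
theorem VTy.trV_renV {Γ : List (ETy BV)} {V : Val CV Op} {T : ETy BV} (ρ : ℕ → ℕ) :
    VTy cvTy opPar opAr Γ V T → trV opAr (renV ρ V) = rename ρ (trV opAr V)
  | .cv _ => rfl
  | .num hk => (rename_numStar ρ ⟨_, hk⟩).symm
  | .var _ => rfl
  | .lam hC => by simp only [renV, trV, rename, hC.trC_renC, upr_eq_tm_upr]
  | .fixv hV => by simp only [renV, trV, rename, hV.trV_renV, upr_eq_tm_upr]

theorem CTy.trC_renC {Γ : List (ETy BV)} {C : Comp CV Op} {T : ETy BV} (ρ : ℕ → ℕ) :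
    CTy cvTy opPar opAr Γ C T → trC opAr (renC ρ C) = rename ρ (trC opAr C)
  | .app hV hW => by
    simp only [renC, trC, rename, hV.trV_renV, hW.trV_renV, rename_upr_lift, Tm.upr_zero]
  | .ret hV => by simp only [renC, trC, rename, hV.trV_renV, rename_upr_lift, Tm.upr_zero]
  | .letin hC hB => by
    simp only [renC, trC, rename, hC.trC_renC, hB.trC_renC, rename_upr_lift, upr_eq_tm_upr,
      rename_upr_upr_rename_upr_succ, Tm.upr_succ, Tm.upr_zero]
  | .opc hV hC => by
    simp only [renC, trC, rename, rename_appArgs, List.map_cons, List.map_ofFn, Function.comp_def,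
      hV.trV_renV, hC.trC_renC, upr_eq_tm_upr, rename_upr_lift, rename_subst0, rename_numStar,
      Tm.upr_zero]
  | .case hV hCs => by
    simp only [renC, trC, rename, rename_appArgs, List.map_ofFn, Function.comp_def,
      hV.trV_renV, fun i => (hCs i).trC_renC, rename_upr_lift, Tm.upr_zero]
end

theorem exists_vTy_var (n : ℕ) : ∃ Γ U, VTy cvTy opPar opAr Γ (.var n : Val CV Op) U :=
  ⟨List.replicate (n + 1) (.enum 0), .enum 0, .var (by simp)⟩

theorem exists_vTy_upsE {σ : ℕ → Val CV Op} (hσ : ∀ n, ∃ Γ U, VTy cvTy opPar opAr Γ (σ n) U) :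
    ∀ n, ∃ Γ U, VTy cvTy opPar opAr Γ (upsE σ n) U
  | 0 => exists_vTy_var 0
  | n + 1 =>
    let ⟨Γ, U, h⟩ := hσ n
    ⟨.enum 0 :: Γ, U, h.renV fun _ _ h => h⟩

theorem exists_vTy_subst0 {Γ : List (ETy BV)} {W : Val CV Op} {T : ETy BV}
    (hW : VTy cvTy opPar opAr Γ W T) :
    ∀ n, ∃ Γ U, VTy cvTy opPar opAr Γ ((fun n => match n with | 0 => W | n + 1 => .var n) n) U
  | 0 => ⟨Γ, T, hW⟩
  | n + 1 => exists_vTy_var n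

theorem trV_upsE {σ : ℕ → Val CV Op} (hσ : ∀ n, ∃ Γ U, VTy cvTy opPar opAr Γ (σ n) U)
    (n : ℕ) : trV opAr (upsE σ n) = ups (trV opAr ∘ σ) n := by
  cases n with
  | zero => rfl
  | succ n =>
    obtain ⟨Γ, U, h⟩ := hσ n
    exact h.trV_renV Nat.succ

mutual
theorem VTy.trV_subV {Γ : List (ETy BV)} {V : Val CV Op} {T : ETy BV} {σ : ℕ → Val CV Op}
    (hσ : ∀ n, ∃ Γ U, VTy cvTy opPar opAr Γ (σ n) U) :
    VTy cvTy opPar opAr Γ V T → trV opAr (subV σ V) = subst (trV opAr ∘ σ) (trV opAr V)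
  | .cv _ => rfl
  | .num hk => (subst_numStar _ ⟨_, hk⟩).symm
  | .var _ => rfl
  | .lam hC => by
    simp only [subV, trV, subst, Function.comp_def, hC.trC_subC (exists_vTy_upsE hσ), trV_upsE hσ]
  | .fixv hV => by
    simp only [subV, trV, subst, Function.comp_def, hV.trV_subV (exists_vTy_upsE hσ), trV_upsE hσ]

theorem CTy.trC_subC {Γ : List (ETy BV)} {C : Comp CV Op} {T : ETy BV} {σ : ℕ → Val CV Op}
    (hσ : ∀ n, ∃ Γ U, VTy cvTy opPar opAr Γ (σ n) U) :
    CTy cvTy opPar opAr Γ C T → trC opAr (subC σ C) = subst (trV opAr ∘ σ) (trC opAr C)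
  | .app hV hW => by
    simp only [subC, trC, subst, hV.trV_subV hσ, hW.trV_subV hσ, subst_ups_lift, ups_zero]
  | .ret hV => by simp only [subC, trC, subst, hV.trV_subV hσ, subst_ups_lift, ups_zero]
  | .letin hC hB => by
    simp only [subC, trC, subst, hC.trC_subC hσ, hB.trC_subC (exists_vTy_upsE hσ),
      Function.comp_def, trV_upsE hσ, upr_eq_tm_upr, subst_ups_lift, subst_ups_ups_rename_upr_succ,
      ups_succ, ups_zero]
    rfl
  | .opc hV hC => by
    simp only [subC, trC, subst, subst_appArgs, List.map_cons, List.map_ofFn, Function.comp_def,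
      hV.trV_subV hσ, hC.trC_subC (exists_vTy_upsE hσ), trV_upsE hσ, subst_ups_lift,
      subst_subst0, subst_numStar, ups_zero]
  | .case hV hCs => by
    simp only [subC, trC, subst, subst_appArgs, List.map_ofFn, Function.comp_def,
      hV.trV_subV hσ, fun i => (hCs i).trC_subC hσ, subst_ups_lift, ups_zero]
end

theorem CTy.trC_subst0C {Γ Δ : List (ETy BV)} {C : Comp CV Op} {W : Val CV Op} {T U : ETy BV}
    (hC : CTy cvTy opPar opAr Γ C U) (hW : VTy cvTy opPar opAr Δ W T) :
    trC opAr (EPCF.subst0C W C) = Tm.subst0 (trV opAr W) (trC opAr C) := by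
  rw [EPCF.subst0C, hC.trC_subC (exists_vTy_subst0 hW), Tm.subst0]
  congr 1; funext n; cases n <;> rfl

theorem VTy.trV_subst0V {Γ Δ : List (ETy BV)} {V W : Val CV Op} {T U : ETy BV}
    (hV : VTy cvTy opPar opAr Γ V U) (hW : VTy cvTy opPar opAr Δ W T) :
    trV opAr (EPCF.subst0V W V) = Tm.subst0 (trV opAr W) (trV opAr V) := by
  rw [EPCF.subst0V, hV.trV_subV (exists_vTy_subst0 hW), Tm.subst0]
  congr 1; funext n; cases n <;> rfl

section Steps

variable (opAr) (d : Tm (CV ⊕ Op))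

theorem step_trC_app (V W : Val CV Op) :
    Step (.app (trC opAr (.app V W)) d) (.app (.app (trV opAr V) (trV opAr W)) d) := by
  rw [trC]
  convert Step.beta _ d using 1
  simp

theorem step_trC_ret (V : Val CV Op) :
    Step (.app (trC opAr (.ret V)) d) (.app d (trV opAr V)) := by
  rw [trC]
  convert Step.beta _ d using 1
  simp

theorem step_trC_letin (C B : Comp CV Op) :
    Step (.app (trC opAr (.letin C B)) d)
      (.app (trC opAr C) (.lam (.app (trC opAr B) (lift d)))) := by
  rw [trC]
  convert Step.beta _ d using 1
  simp [upr_eq_tm_upr, subst0_lam_rename_upr_succ]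

theorem step_trC_opc (σ : Op) (V : Val CV Op) (C : Comp CV Op) :
    Step (.app (trC opAr (.opc σ V C)) d)
      (appArgs (.const (.inr σ)) (trV opAr V ::
        List.ofFn fun i : Fin (opAr σ) => .app (subst0 (numStar (opAr σ) i) (trC opAr C)) d)) := by
  rw [trC]
  convert Step.beta _ d using 1
  simp [subst0_appArgs, Function.comp_def]

theorem step_trC_case (k : ℕ) (V : Val CV Op) (Cs : Fin k → Comp CV Op) :
    Step (.app (trC opAr (.case k V Cs)) d)
      (appArgs (trV opAr V) (List.ofFn fun i => .app (trC opAr (Cs i)) d)) := by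
  rw [trC]
  convert Step.beta _ d using 1
  simp [subst0_appArgs, Function.comp_def]

end Steps

def CPSJoin (opAr : Op → ℕ) (C D : Comp CV Op) : Prop :=
  ∀ d, ∃ X m n, NSteps Step (.app (trC opAr C) d) m X ∧ NSteps Step (.app (trC opAr D) d) n X ∧
    n < m

theorem CPSJoin.btAt_iff {C D : Comp CV Op} (h : CPSJoin opAr C D) (d : Tm (CV ⊕ Op))
    (p : List ℕ) (l : Option (CV ⊕ Op)) :
    BTAt (arF opAr) (.app (trC opAr C) d) p l ↔ BTAt (arF opAr) (.app (trC opAr D) d) p l :=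
  let ⟨_, _, _, hC, hD, _⟩ := h d
  (btAt_iff_of_reflTransGen hC.reflTransGen p l).trans
    (btAt_iff_of_reflTransGen hD.reflTransGen p l).symm

theorem CPSJoin.letin {C C' : Comp CV Op} (h : CPSJoin opAr C C') (B : Comp CV Op) :
    CPSJoin opAr (.letin C B) (.letin C' B) := fun d =>
  let ⟨X, m, n, hC, hC', hlt⟩ := h (.lam (.app (trC opAr B) (lift d)))
  ⟨X, m + 1, n + 1, .head (step_trC_letin opAr d C B) hC, .head (step_trC_letin opAr d C' B) hC',
    by omega⟩

theorem cpsJoin_beta {T U : ETy BV} {C : Comp CV Op} {W : Val CV Op}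
    (hC : CTy cvTy opPar opAr [T] C U) (hW : VTy cvTy opPar opAr [] W T) :
    CPSJoin opAr (.app (.lam C) W) (subst0C W C) := fun d =>
  ⟨_, 2, 0, .head (step_trC_app opAr d _ W)
    (.head (.appL d (by rw [hC.trC_subst0C hW]; exact .beta _ _)) (.refl _)), .refl _, by omega⟩

theorem cpsJoin_fix {T U : ETy BV} {V W : Val CV Op}
    (hV : VTy cvTy opPar opAr [.arr T U] V (.arr T U)) :
    CPSJoin opAr (.app (.fixv V) W) (.app (subst0V (.fixv V) V) W) := fun d =>
  ⟨_, 3, 1, .head (step_trC_app opAr d _ W) (.head (.appL d (.appL _ (.fix _)))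
    (.head (.appL d (.appL _ (by rw [hV.trV_subst0V (.fixv hV)]; exact .beta _ _))) (.refl _))),
    .head (step_trC_app opAr d _ W) (.refl _), by omega⟩

theorem cpsJoin_case {n k : ℕ} (h : n < k) (Cs : Fin k → Comp CV Op) :
    CPSJoin opAr (.case k (.num n k) Cs) (Cs ⟨n, h⟩) := fun d => by
  have hproj := reflTransGen_appArgs_iterate_lam_var
    (Ns := List.ofFn fun i => .app (trC opAr (Cs i)) d) (n := n)
    (N := .app (trC opAr (Cs ⟨n, h⟩)) d) (by simp [h])
  rw [List.length_ofFn, ← numStar_eq] at hproj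
  obtain ⟨m, hm⟩ := hproj.exists_nSteps
  exact ⟨_, m + 1, 0, .head (step_trC_case opAr d k _ Cs) hm, .refl _, by omega⟩

theorem cpsJoin_letRet {T U : ETy BV} {V : Val CV Op} {B : Comp CV Op}
    (hV : VTy cvTy opPar opAr [] V T) (hB : CTy cvTy opPar opAr [T] B U) :
    CPSJoin opAr (.letin (.ret V) B) (subst0C V B) := fun d =>
  ⟨_, 3, 0, .head (step_trC_letin opAr d _ B) (.head (step_trC_ret opAr _ V)
    (.head (by rw [hB.trC_subst0C hV]; simpa using Step.beta (.app (trC opAr B) (lift d)) _)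
      (.refl _))), .refl _, by omega⟩

theorem EStep.cpsJoin_or_reflTransGen_opc {C D : Comp CV Op} {T : ETy BV}
    (hs : EStep C D) (hC : CTy cvTy opPar opAr [] C T) :
    CPSJoin opAr C D ∨ ∃ σ V C', ReflTransGen EStep D (.opc σ V C') := by
  induction hs generalizing T with
  | beta =>
    cases hC with | app hV hW => cases hV with | lam hC => exact .inl (cpsJoin_beta hC hW)
  | fix => cases hC with | app hV _ => cases hV with | fixv hV => exact .inl (cpsJoin_fix hV)
  | case h Cs => exact .inl (cpsJoin_case h Cs)
  | letRet =>
    cases hC with | letin hC hB => cases hC with | ret hV => exact .inl (cpsJoin_letRet hV hB)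
  | letCong B _ ih =>
    cases hC with
    | letin hC _ =>
      rcases ih hC with h | ⟨σ, V, C', hr⟩
      · exact .inl (h.letin B)
      · exact .inr ⟨σ, V, _, (reflTransGen_letin hr B).tail (.letOp σ V C' B)⟩
  | letOp σ V C D => exact .inr ⟨σ, V, _, .refl⟩

theorem btAt_trC_letin_opc_iff {σ : Op} {V : Val CV Op} {C D : Comp CV Op} {T : ETy BV}
    (hC : CTy cvTy opPar opAr [] (.letin (.opc σ V C) D) T) (d : Tm (CV ⊕ Op)) (p : List ℕ)
    (l : Option (CV ⊕ Op)) :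
    BTAt (arF opAr) (.app (trC opAr (.letin (.opc σ V C) D)) d) p l ↔
      BTAt (arF opAr) (.app (trC opAr (.opc σ V (.letin C (renC (upr Nat.succ) D)))) d) p l := by
  have hC' := hC.of_estep (.letOp σ V C D)
  cases hC with | letin hC _ => cases hC with | opc _ hC =>
  cases hC' with | opc _ hLet =>
  rw [btAt_iff_of_step (step_trC_letin opAr d _ D), btAt_iff_of_step (step_trC_opc opAr _ σ V C),
    btAt_iff_of_step (step_trC_opc opAr d σ V _)]
  refine btAt_appArgs_const_congr (by simp [arF]) (by simp [arF]) (fun i hi _ q l => ?_) p l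
  cases i with
  | zero => rfl
  | succ i =>
    have hi : i < opAr σ := by simpa using hi
    have hnum : VTy cvTy opPar opAr [] (.num i (opAr σ) : Val CV Op) (.enum (opAr σ)) := .num hi
    simp only [List.getElem_cons_succ, List.getElem_ofFn]
    rw [← trV_num, ← hC.trC_subst0C hnum, ← hLet.trC_subst0C hnum, subst0C_letin,
      btAt_iff_of_step (step_trC_letin opAr d _ D)]

theorem EStep.btAt_trC_iff {C D : Comp CV Op} {T : ETy BV} (hs : EStep C D)
    (hC : CTy cvTy opPar opAr [] C T) (d : Tm (CV ⊕ Op)) (p : List ℕ) (l : Option (CV ⊕ Op)) :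
    BTAt (arF opAr) (.app (trC opAr C) d) p l ↔ BTAt (arF opAr) (.app (trC opAr D) d) p l := by
  induction hs generalizing T d with
  | letCong B _ ih =>
    cases hC with
    | letin hC _ =>
      rw [btAt_iff_of_step (step_trC_letin opAr d _ B),
        btAt_iff_of_step (step_trC_letin opAr d _ B)]
      exact ih hC _
  | letOp => exact btAt_trC_letin_opc_iff hC d p l
  | beta =>
    cases hC with
    | app hV hW => cases hV with | lam hC => exact (cpsJoin_beta hC hW).btAt_iff d p l
  | fix =>
    cases hC with | app hV _ => cases hV with | fixv hV => exact (cpsJoin_fix hV).btAt_iff d p l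
  | case h Cs => exact (cpsJoin_case h Cs).btAt_iff d p l
  | letRet =>
    cases hC with
    | letin hC hB => cases hC with | ret hV => exact (cpsJoin_letRet hV hB).btAt_iff d p l

theorem btAt_trC_iff_of_reflTransGen {C D : Comp CV Op} {T : ETy BV} (hs : ReflTransGen EStep C D)
    (hC : CTy cvTy opPar opAr [] C T) (d : Tm (CV ⊕ Op)) (p : List ℕ) (l : Option (CV ⊕ Op)) :
    BTAt (arF opAr) (.app (trC opAr C) d) p l ↔ BTAt (arF opAr) (.app (trC opAr D) d) p l := by
  induction hs using ReflTransGen.head_induction_on generalizing T with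
  | refl => rfl
  | head hs _ ih => exact (hs.btAt_trC_iff hC d p l).trans (ih (hC.of_estep hs))

theorem CDiverges.diverges_trC {C : Comp CV Op} {T : ETy BV} (hd : CDiverges C)
    (hC : CTy cvTy opPar opAr [] C T) (c : Tm (CV ⊕ Op)) : Diverges (.app (trC opAr C) c) := by
  intro N hN
  by_contra! hNf
  obtain ⟨n, hn⟩ := hN.exists_nSteps
  clear hN
  induction n using Nat.strong_induction_on generalizing C T with
  | _ n ih =>
    obtain ⟨D, hD⟩ := hd C .refl
    rcases hD.cpsJoin_or_reflTransGen_opc hC with hj | ⟨σ, V, C', hr⟩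
    · obtain ⟨X, m, k, hCX, hDX, hlt⟩ := hj c
      obtain ⟨hle, hXN⟩ := hCX.sub_of_not_rel step_rightUnique hn hNf
      exact ih _ (by omega) (hd.of_estep hD) (hC.of_estep hD) (hDX.trans hXN)
    · exact hd.not_reflTransGen_opc σ V C' (.head hD hr)

/-- The tree `σ(v, t₀, …, t_{k-1})`, with `tᵢ` described by `child i`. -/
def OpNodeAt (opAr : Op → ℕ) (σ : Op) (v : CV)
    (child : ℕ → List ℕ → Option (CV ⊕ Op) → Prop) : List ℕ → Option (CV ⊕ Op) → Prop
  | [], l => l = some (.inr σ)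
  | 0 :: q, l => q = [] ∧ l = some (.inl v)
  | (i + 1) :: q, l => i < opAr σ ∧ child i q l

theorem btAt_trC_iff_opNodeAt {C C' : Comp CV Op} {T : ETy BV} {σ : Op} {v : CV}
    (hC : CTy cvTy opPar opAr [] C T) (hr : ReflTransGen EStep C (.opc σ (.cv v) C'))
    (c : Tm (CV ⊕ Op)) (p : List ℕ) (l : Option (CV ⊕ Op)) :
    BTAt (arF opAr) (.app (trC opAr C) c) p l ↔
      OpNodeAt opAr σ v
        (fun i => BTAt (arF opAr) (.app (trC opAr (subst0C (.num i (opAr σ)) C')) c)) p l := by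
  have hlen : (trV opAr (.cv v) :: List.ofFn fun i : Fin (opAr σ) =>
      Tm.app (subst0 (numStar (opAr σ) i) (trC opAr C')) c).length =
        arF (CV := CV) opAr (.inr σ) := by
    simp [arF]
  cases hC.of_reflTransGen hr with | opc _ hC' =>
  rw [btAt_trC_iff_of_reflTransGen hr hC, btAt_iff_of_step (step_trC_opc opAr c σ _ C')]
  match p with
  | [] => exact btAt_appArgs_const_nil hlen l
  | 0 :: q =>
    rw [btAt_appArgs_const_cons hlen]
    simpa [OpNodeAt, trV] using btAt_const (ar := arF opAr) (f := .inl v) rfl q l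
  | (i + 1) :: q =>
    rw [btAt_appArgs_const_cons hlen]
    by_cases hi : i < opAr σ
    · have hnum : VTy cvTy opPar opAr [] (.num i (opAr σ) : Val CV Op) (.enum (opAr σ)) := .num hi
      simp [OpNodeAt, hi, hC'.trC_subst0C hnum, trV_num]
    · simp [OpNodeAt, hi]

section Mixed

variable {c : Tm (CV ⊕ Op)} {C : Comp CV Op}

theorem mixed_iff_of_cdiverges (hd : CDiverges C) (p : List ℕ) (l : Option (CV ⊕ Op)) :
    Mixed opAr c C p l ↔ p = [] ∧ l = none := by
  constructor
  · rintro (_ | ⟨hr, -⟩ | hr | hr | ⟨hr, -, -⟩)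
    · exact ⟨rfl, rfl⟩
    · exact (hd.not_reflTransGen_ret _ hr).elim
    all_goals exact (hd.not_reflTransGen_opc _ _ _ hr).elim
  · rintro ⟨rfl, rfl⟩
    exact .bot hd

theorem mixed_iff_of_reflTransGen_ret {V : Val CV Op} (hr : ReflTransGen EStep C (.ret V))
    (p : List ℕ) (l : Option (CV ⊕ Op)) :
    Mixed opAr c C p l ↔ BTAt (arF opAr) (.app c (trV opAr V)) p l := by
  have hnf := not_estep_ret V
  constructor
  · rintro (⟨hd⟩ | ⟨hr', hb⟩ | hr' | hr' | ⟨hr', -, -⟩)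
    · exact (hd.not_reflTransGen_ret _ hr).elim
    · cases hr.eq_of_not_rel_of_not_rel estep_rightUnique hr' hnf (not_estep_ret _)
      exact hb
    all_goals cases hr.eq_of_not_rel_of_not_rel estep_rightUnique hr' hnf (not_estep_opc _ _ _)
  · exact .ret hr

theorem mixed_iff_opNodeAt {σ : Op} {v : CV} {C' : Comp CV Op}
    (hr : ReflTransGen EStep C (.opc σ (.cv v) C')) (p : List ℕ) (l : Option (CV ⊕ Op)) :
    Mixed opAr c C p l ↔
      OpNodeAt opAr σ v (fun i => Mixed opAr c (subst0C (.num i (opAr σ)) C')) p l := by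
  have hnf := not_estep_opc σ (.cv v) C'
  constructor
  · rintro (⟨hd⟩ | ⟨hr', -⟩ | hr' | hr' | ⟨hr', hi, hm⟩)
    · exact (hd.not_reflTransGen_opc _ _ _ hr).elim
    · cases hr.eq_of_not_rel_of_not_rel estep_rightUnique hr' hnf (not_estep_ret _)
    all_goals
      cases hr.eq_of_not_rel_of_not_rel estep_rightUnique hr' hnf (not_estep_opc _ _ _)
      simp_all [OpNodeAt]
  · match p with
    | [] => rintro rfl; exact .opHead hr
    | 0 :: q => rintro ⟨rfl, rfl⟩; exact .opParam hr
    | (i + 1) :: q => rintro ⟨hi, hm⟩; exact .opChild hr hi hm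

end Mixed

theorem btAt_trC_iff_mixed (c : Tm (CV ⊕ Op)) :
    ∀ (p : List ℕ) {C : Comp CV Op} {T : ETy BV}, CTy cvTy opPar opAr [] C T →
      ∀ l, BTAt (arF opAr) (.app (trC opAr C) c) p l ↔ Mixed opAr c C p l
  | p, C, T, hC, l => by
    rcases hC.cdiverges_or_reduces with hd | ⟨V, hr⟩ | ⟨σ, V, C', hr⟩
    · rw [btAt_iff_of_diverges (hd.diverges_trC hC c), mixed_iff_of_cdiverges hd]
    · rw [btAt_trC_iff_of_reflTransGen hr hC, btAt_iff_of_step (step_trC_ret opAr c V),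
        mixed_iff_of_reflTransGen_ret hr]
    · cases hC.of_reflTransGen hr with | opc hV hC' =>
      obtain ⟨v, rfl⟩ := hV.exists_eq_cv
      rw [btAt_trC_iff_opNodeAt hC hr, mixed_iff_opNodeAt hr]
      match p with
      | [] | 0 :: _ => rfl
      | (i + 1) :: q =>
        exact and_congr_right fun hi => btAt_trC_iff_mixed c q (hC'.subst0C (.num hi)) l

end EPCF

open LamY LamY.Tm EPCF in
/-- For any closed EPCF computation `⊢ C : T` and any continuation
`⊢ c : T* → o`, the Böhm tree of `C* c` equals the effect tree of `C` in
which every leaf `return(V)` has been replaced by the Böhm tree of `c V*`. -/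
theorem cps_computes_effect_tree {BV CV Op : Type}
    (cvTy : CV → BV) (opPar : Op → BV) (opAr : Op → ℕ)
    (C : Comp CV Op) (T : ETy BV) (c : Tm (CV ⊕ Op))
    (hC : CTy cvTy opPar opAr [] C T)
    (hc : HasTy (arF opAr) [] c (Ty.arr (trTy T) .o)) :
    ∀ (p : List ℕ) (l : Option (CV ⊕ Op)),
      BTAt (arF opAr) (Tm.app (trC opAr C) c) p l ↔ Mixed opAr c C p l :=
  fun p => btAt_trC_iff_mixed c p hC
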